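/- In the maintenance example with α_0 = α_1 = 1/4 and two repair actions c (parameters β_0, β_1) and d (parameters θ_0, θ_1), the policy always choosing c is optimal if and only if 5β_0 + 6β_1 ≥ 5θ_0 + 6θ_1, and the policy always choosing d is optimal if and only if 5θ_0 + 6θ_1 ≥ 5β_0 + 6β_1, among stationary policies on G_* = {(1,2),(2,1),(2,2)}. -/

import Mathlib

open Finset

variable {S A : Type*}

/-- `hitLe p B n i = P_i(τ_B ≤ n)`: the probability that the Markov chain with
transition kernel `p`, started at `i`, hits the set `B` within `n` steps. -/
noncomputable def hitLe [Fintype S] [DecidableEq S] (p : S → S → ℝ) (B : Finset S) :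
    ℕ → S → ℝ
  | 0, i => if i ∈ B then 1 else 0
  | n + 1, i => if i ∈ B then 1 else ∑ j, p i j * hitLe p B n j

/-- `hitProb p B i = P_i(τ_B < ∞)`, the probability of ever hitting `B` from `i`. -/
noncomputable def hitProb [Fintype S] [DecidableEq S] (p : S → S → ℝ) (B : Finset S)
    (i : S) : ℝ :=
  ⨆ n, hitLe p B n i

/-- One-step distribution of an available machine, with `α₀ = α₁ = 1/4`. -/
noncomputable def avail : Fin 3 → ℝ := ![1 / 4, 1 / 4, 1 / 2]

/-- One-step distribution of the deteriorating machine under a repair action with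
success parameters `(r0, r1)`: available w.p. `r0`, still deteriorating w.p. `r1`,
broken w.p. `1 - r0 - r1`. -/
noncomputable def repair (r0 r1 : ℝ) : Fin 3 → ℝ := ![1 - r0 - r1, r1, r0]

/-- The transition kernel of the maintenance system under a stationary policy
`g : S → Bool`, where `false` = repair action `c` (parameters `β₀, β₁`) and
`true` = repair action `d` (parameters `θ₀, θ₁`); the choice only matters at the
states `(1,2)` and `(2,1)`, all states in `S₁` are absorbing. -/
noncomputable def pMaint2 (β0 β1 θ0 θ1 : ℝ) (g : Fin 3 × Fin 3 → Bool) :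
    Fin 3 × Fin 3 → Fin 3 × Fin 3 → ℝ := fun i j =>
  if i = (1, 2) then
    (if g i then repair θ0 θ1 else repair β0 β1) j.1 * avail j.2
  else if i = (2, 1) then
    avail j.1 * (if g i then repair θ0 θ1 else repair β0 β1) j.2
  else if i = (2, 2) then avail j.1 * avail j.2
  else if j = i then 1 else 0

/-- The failed-state set `B = {(0,0)}`. -/
def BM : Finset (Fin 3 × Fin 3) := {(0, 0)}

/-- `G_* = {(1,2),(2,1),(2,2)}`. -/
def GM : Finset (Fin 3 × Fin 3) := {(1, 2), (2, 1), (2, 2)}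

section auxlemmas

variable {S' : Type*} [Fintype S'] [DecidableEq S'] (p : S' → S' → ℝ) (B' : Finset S')

lemma hitLe_nonneg (hp : ∀ i j, 0 ≤ p i j) : ∀ n i, 0 ≤ hitLe p B' n i := by
  intro n
  induction n with
  | zero => intro i; unfold hitLe; split <;> norm_num
  | succ n ih =>
      intro i; unfold hitLe; split
      · norm_num
      · exact Finset.sum_nonneg fun j _ => mul_nonneg (hp i j) (ih j)

lemma hitLe_le_one (hp : ∀ i j, 0 ≤ p i j) (hrow : ∀ i, ∑ j, p i j = 1) :
    ∀ n i, hitLe p B' n i ≤ 1 := by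
  intro n
  induction n with
  | zero => intro i; unfold hitLe; split <;> norm_num
  | succ n ih =>
      intro i; unfold hitLe; split
      · norm_num
      · calc ∑ j, p i j * hitLe p B' n j ≤ ∑ j, p i j * 1 :=
              Finset.sum_le_sum fun j _ => mul_le_mul_of_nonneg_left (ih j) (hp i j)
          _ = 1 := by simp [hrow i]

lemma hitLe_mono (hp : ∀ i j, 0 ≤ p i j) :
    ∀ n i, hitLe p B' n i ≤ hitLe p B' (n + 1) i := by
  intro n
  induction n with
  | zero =>
      intro i
      show (if i ∈ B' then (1:ℝ) else 0) ≤ _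
      unfold hitLe; split
      · norm_num
      · exact Finset.sum_nonneg fun j _ =>
          mul_nonneg (hp i j) (hitLe_nonneg p B' hp 0 j)
  | succ n ih =>
      intro i
      show (if i ∈ B' then (1:ℝ) else _) ≤ (if i ∈ B' then (1:ℝ) else _)
      split
      · norm_num
      · exact Finset.sum_le_sum fun j _ => mul_le_mul_of_nonneg_left (ih j) (hp i j)

lemma hitLe_monotone (hp : ∀ i j, 0 ≤ p i j) (i : S') :
    Monotone fun n => hitLe p B' n i :=
  monotone_nat_of_le_succ fun n => hitLe_mono p B' hp n i

lemma hitProb_mem {i : S'} (hi : i ∈ B') : hitProb p B' i = 1 := by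
  have : ∀ n, hitLe p B' n i = 1 := by
    intro n; cases n <;> · unfold hitLe; rw [if_pos hi]
  unfold hitProb
  simp [this]

lemma hitProb_absorbing {i : S'} (hp : ∀ j, p i j = if j = i then 1 else 0) (hi : i ∉ B') :
    hitProb p B' i = 0 := by
  have : ∀ n, hitLe p B' n i = 0 := by
    intro n
    induction n with
    | zero => unfold hitLe; rw [if_neg hi]
    | succ n ihn =>
        unfold hitLe; rw [if_neg hi]
        simp only [hp, ite_mul, one_mul, zero_mul]
        rw [Finset.sum_ite_eq' Finset.univ i (hitLe p B' n)]
        simpa using ihn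
  unfold hitProb
  simp [this]

lemma hitProb_eq (hp : ∀ i j, 0 ≤ p i j) (hrow : ∀ i, ∑ j, p i j = 1)
    {i : S'} (hi : i ∉ B') :
    hitProb p B' i = ∑ j, p i j * hitProb p B' j := by
  have hbdd : ∀ j : S', BddAbove (Set.range fun n => hitLe p B' n j) := by
    intro j
    exact ⟨1, by rintro x ⟨n, rfl⟩; exact hitLe_le_one p B' hp hrow n j⟩
  have htend : ∀ j : S', Filter.Tendsto (fun n => hitLe p B' n j) Filter.atTop
      (nhds (hitProb p B' j)) := fun j =>
    tendsto_atTop_ciSup (hitLe_monotone p B' hp j) (hbdd j)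
  have h1 : Filter.Tendsto (fun n => hitLe p B' (n + 1) i) Filter.atTop
      (nhds (hitProb p B' i)) := (htend i).comp (Filter.tendsto_add_atTop_nat 1)
  have h2 : Filter.Tendsto (fun n => hitLe p B' (n + 1) i) Filter.atTop
      (nhds (∑ j, p i j * hitProb p B' j)) := by
    have heq : (fun n => hitLe p B' (n + 1) i) = fun n => ∑ j, p i j * hitLe p B' n j := by
      funext n
      rw [show hitLe p B' (n + 1) i
            = if i ∈ B' then 1 else ∑ j, p i j * hitLe p B' n j from rfl, if_neg hi]
    rw [heq]
    exact tendsto_finset_sum _ fun j _ => (htend j).const_mul _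
  exact tendsto_nhds_unique h1 h2

end auxlemmas

/-- The kernel with repair parameters `(r0, r1)` at `(1,2)` and `(s0, s1)` at `(2,1)`. -/
noncomputable def qq (r0 r1 s0 s1 : ℝ) : Fin 3 × Fin 3 → Fin 3 × Fin 3 → ℝ :=
  pMaint2 r0 r1 s0 s1 (fun i => decide (i = (2, 1)))

lemma qq_row12 (r0 r1 s0 s1 : ℝ) (j : Fin 3 × Fin 3) :
    qq r0 r1 s0 s1 (1, 2) j = repair r0 r1 j.1 * avail j.2 := by
  simp [qq, pMaint2]

lemma qq_row21 (r0 r1 s0 s1 : ℝ) (j : Fin 3 × Fin 3) :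
    qq r0 r1 s0 s1 (2, 1) j = avail j.1 * repair s0 s1 j.2 := by
  simp [qq, pMaint2]

lemma qq_row22 (r0 r1 s0 s1 : ℝ) (j : Fin 3 × Fin 3) :
    qq r0 r1 s0 s1 (2, 2) j = avail j.1 * avail j.2 := by
  simp [qq, pMaint2]

lemma qq_abs (r0 r1 s0 s1 : ℝ) (i : Fin 3 × Fin 3) (h1 : i ≠ (1,2)) (h2 : i ≠ (2,1))
    (h3 : i ≠ (2,2)) (j : Fin 3 × Fin 3) :
    qq r0 r1 s0 s1 i j = if j = i then 1 else 0 := by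
  simp [qq, pMaint2, h1, h2, h3]

lemma qq_nonneg (r0 r1 s0 s1 : ℝ) (h0 : 0 < r0) (h1 : 0 < r1) (h : r0 + r1 < 1)
    (k0 : 0 < s0) (k1 : 0 < s1) (k : s0 + s1 < 1) :
    ∀ i j, 0 ≤ qq r0 r1 s0 s1 i j := by
  have ha : ∀ m : Fin 3, 0 ≤ avail m := by
    intro m; fin_cases m <;> norm_num [avail]
  have hr : ∀ (a0 a1 : ℝ), 0 < a0 → 0 < a1 → a0 + a1 < 1 → ∀ m : Fin 3, 0 ≤ repair a0 a1 m := by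
    intro a0 a1 x0 x1 x m; fin_cases m <;> · simp [repair]; linarith
  intro i j
  by_cases e1 : i = (1,2)
  · subst e1; rw [qq_row12]; exact mul_nonneg (hr _ _ h0 h1 h j.1) (ha j.2)
  by_cases e2 : i = (2,1)
  · subst e2; rw [qq_row21]; exact mul_nonneg (ha j.1) (hr _ _ k0 k1 k j.2)
  by_cases e3 : i = (2,2)
  · subst e3; rw [qq_row22]; exact mul_nonneg (ha j.1) (ha j.2)
  · rw [qq_abs _ _ _ _ _ e1 e2 e3]; exact ite_nonneg zero_le_one le_rfl

lemma qq_rowsum (r0 r1 s0 s1 : ℝ) : ∀ i, ∑ j, qq r0 r1 s0 s1 i j = 1 := by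
  have ha : ∑ m : Fin 3, avail m = 1 := by norm_num [avail, Fin.sum_univ_three, Matrix.cons_val_two, Matrix.tail_cons, Matrix.head_cons]
  have hr : ∀ a0 a1 : ℝ, ∑ m : Fin 3, repair a0 a1 m = 1 := by
    intro a0 a1; simp [repair, Fin.sum_univ_three]
  intro i
  by_cases e1 : i = (1,2)
  · subst e1
    simp only [qq_row12]
    rw [Fintype.sum_prod_type, ← Finset.sum_mul_sum, hr, ha]; norm_num
  by_cases e2 : i = (2,1)
  · subst e2
    simp only [qq_row21]
    rw [Fintype.sum_prod_type, ← Finset.sum_mul_sum, hr, ha]; norm_num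
  by_cases e3 : i = (2,2)
  · subst e3
    simp only [qq_row22]
    rw [Fintype.sum_prod_type, ← Finset.sum_mul_sum, ha]; norm_num
  · simp only [qq_abs _ _ _ _ _ e1 e2 e3]
    simp

lemma qq_E (r0 r1 s0 s1 : ℝ) (h0 : 0 < r0) (h1 : 0 < r1) (h : r0 + r1 < 1)
    (k0 : 0 < s0) (k1 : 0 < s1) (k : s0 + s1 < 1) :
    hitProb (qq r0 r1 s0 s1) BM (1, 2)
      = (1 - r0 - r1) / 4 + r1 / 2 * hitProb (qq r0 r1 s0 s1) BM (1, 2)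
        + r0 / 4 * hitProb (qq r0 r1 s0 s1) BM (2, 1)
        + r0 / 2 * hitProb (qq r0 r1 s0 s1) BM (2, 2) ∧
    hitProb (qq r0 r1 s0 s1) BM (2, 1)
      = (1 - s0 - s1) / 4 + s1 / 2 * hitProb (qq r0 r1 s0 s1) BM (2, 1)
        + s0 / 4 * hitProb (qq r0 r1 s0 s1) BM (1, 2)
        + s0 / 2 * hitProb (qq r0 r1 s0 s1) BM (2, 2) ∧
    hitProb (qq r0 r1 s0 s1) BM (2, 2)
      = 1 / 16 + 1 / 8 * hitProb (qq r0 r1 s0 s1) BM (1, 2)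
        + 1 / 8 * hitProb (qq r0 r1 s0 s1) BM (2, 1)
        + 1 / 4 * hitProb (qq r0 r1 s0 s1) BM (2, 2) := by
  set p := qq r0 r1 s0 s1 with hpdef
  have hp := qq_nonneg r0 r1 s0 s1 h0 h1 h k0 k1 k
  have hrow := qq_rowsum r0 r1 s0 s1
  have hv00 : hitProb p BM (0, 0) = 1 := hitProb_mem p BM (by decide)
  have habs : ∀ i : Fin 3 × Fin 3, i ≠ (1,2) → i ≠ (2,1) → i ≠ (2,2) → i ∉ BM →
      hitProb p BM i = 0 := fun i e1 e2 e3 hi =>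
    hitProb_absorbing p BM (qq_abs r0 r1 s0 s1 i e1 e2 e3) hi
  have hv01 : hitProb p BM (0, 1) = 0 := habs _ (by decide) (by decide) (by decide) (by decide)
  have hv02 : hitProb p BM (0, 2) = 0 := habs _ (by decide) (by decide) (by decide) (by decide)
  have hv10 : hitProb p BM (1, 0) = 0 := habs _ (by decide) (by decide) (by decide) (by decide)
  have hv11 : hitProb p BM (1, 1) = 0 := habs _ (by decide) (by decide) (by decide) (by decide)
  have hv20 : hitProb p BM (2, 0) = 0 := habs _ (by decide) (by decide) (by decide) (by decide)
  refine ⟨?_, ?_, ?_⟩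
  · conv_lhs => rw [hitProb_eq p BM hp hrow (show ((1:Fin 3), (2:Fin 3)) ∉ BM by decide)]
    rw [Fintype.sum_prod_type]
    simp only [Fin.sum_univ_three, hpdef, qq_row12, repair, avail,
      Matrix.cons_val_zero, Matrix.cons_val_one, Matrix.head_cons, Matrix.cons_val_two,
      Matrix.tail_cons]
    rw [hv00, hv01, hv02, hv10, hv11, hv20]
    ring
  · conv_lhs => rw [hitProb_eq p BM hp hrow (show ((2:Fin 3), (1:Fin 3)) ∉ BM by decide)]
    rw [Fintype.sum_prod_type]
    simp only [Fin.sum_univ_three, hpdef, qq_row21, repair, avail,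
      Matrix.cons_val_zero, Matrix.cons_val_one, Matrix.head_cons, Matrix.cons_val_two,
      Matrix.tail_cons]
    rw [hv00, hv01, hv02, hv10, hv11, hv20]
    ring
  · conv_lhs => rw [hitProb_eq p BM hp hrow (show ((2:Fin 3), (2:Fin 3)) ∉ BM by decide)]
    rw [Fintype.sum_prod_type]
    simp only [Fin.sum_univ_three, hpdef, qq_row22, repair, avail,
      Matrix.cons_val_zero, Matrix.cons_val_one, Matrix.head_cons, Matrix.cons_val_two,
      Matrix.tail_cons]
    rw [hv00, hv01, hv02, hv10, hv11, hv20]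
    ring

lemma pMaint2_eq (β0 β1 θ0 θ1 : ℝ) (g : Fin 3 × Fin 3 → Bool) :
    pMaint2 β0 β1 θ0 θ1 g =
      qq (if g (1,2) then θ0 else β0) (if g (1,2) then θ1 else β1)
         (if g (2,1) then θ0 else β0) (if g (2,1) then θ1 else β1) := by
  funext i j
  by_cases e1 : i = (1,2)
  · subst e1
    cases hg : g (1,2) <;> simp [pMaint2, qq, hg, repair]
  by_cases e2 : i = (2,1)
  · subst e2
    cases hg : g (2,1) <;> simp [pMaint2, qq, hg, repair]
  by_cases e3 : i = (2,2)
  · subst e3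
    simp [pMaint2, qq]
  · simp [pMaint2, qq, e1, e2, e3]

/-- For the symmetric policy `qq b b`, the hitting probability at `(1,2)` satisfies
`(24 - 2u) X = 6 - u` where `u = 5 b0 + 6 b1`, and equals the value at `(2,1)`. -/
lemma qq_sym (b0 b1 : ℝ) (h0 : 0 < b0) (h1 : 0 < b1) (h : b0 + b1 < 1) :
    hitProb (qq b0 b1 b0 b1) BM (1, 2) = hitProb (qq b0 b1 b0 b1) BM (2, 1) ∧
    (24 - 2 * (5 * b0 + 6 * b1)) * hitProb (qq b0 b1 b0 b1) BM (1, 2)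
      = 6 - (5 * b0 + 6 * b1) := by
  obtain ⟨hE1, hE2, hE3⟩ := qq_E b0 b1 b0 b1 h0 h1 h h0 h1 h
  set X := hitProb (qq b0 b1 b0 b1) BM (1, 2)
  set Y := hitProb (qq b0 b1 b0 b1) BM (2, 1)
  set Z := hitProb (qq b0 b1 b0 b1) BM (2, 2)
  have hXY : X = Y := by
    have hc : (1 - b1 / 2 + b0 / 4) * (X - Y) = 0 := by linear_combination hE1 - hE2
    have : (0:ℝ) < 1 - b1 / 2 + b0 / 4 := by linarith
    have := mul_eq_zero.mp hc
    rcases this with hcontra | hxy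
    · linarith
    · linarith
  exact ⟨hXY, by linear_combination 24 * hE1 + 16 * b0 * hE3 - 8 * b0 * hXY⟩

set_option maxHeartbeats 1000000 in
/-- Master comparison lemma. -/
lemma qq_compare (b0 b1 r0 r1 s0 s1 : ℝ)
    (hb0 : 0 < b0) (hb1 : 0 < b1) (hb : b0 + b1 < 1)
    (hr0 : 0 < r0) (hr1 : 0 < r1) (hr : r0 + r1 < 1)
    (hs0 : 0 < s0) (hs1 : 0 < s1) (hs : s0 + s1 < 1)
    (hx : (6 - (5*b0 + 6*b1)) * ((24 - 2*r0 - 12*r1) * (24 - 2*s0 - 12*s1) - 64*r0*s0)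
        ≤ ((24 - 2*s0 - 12*s1) * (6 - 5*r0 - 6*r1) + 8*r0 * (6 - 5*s0 - 6*s1))
            * (24 - 2*(5*b0 + 6*b1)))
    (hy : (6 - (5*b0 + 6*b1)) * ((24 - 2*r0 - 12*r1) * (24 - 2*s0 - 12*s1) - 64*r0*s0)
        ≤ ((24 - 2*r0 - 12*r1) * (6 - 5*s0 - 6*s1) + 8*s0 * (6 - 5*r0 - 6*r1))
            * (24 - 2*(5*b0 + 6*b1))) :
    ∀ i ∈ GM, hitProb (qq b0 b1 b0 b1) BM i ≤ hitProb (qq r0 r1 s0 s1) BM i := by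
  obtain ⟨hXY, hX1⟩ := qq_sym b0 b1 hb0 hb1 hb
  obtain ⟨hE1, hE2, hE3⟩ := qq_E r0 r1 s0 s1 hr0 hr1 hr hs0 hs1 hs
  obtain ⟨hB1, hB2, hB3⟩ := qq_E b0 b1 b0 b1 hb0 hb1 hb hb0 hb1 hb
  set X1 := hitProb (qq b0 b1 b0 b1) BM (1, 2)
  set Y1 := hitProb (qq b0 b1 b0 b1) BM (2, 1)
  set Z1 := hitProb (qq b0 b1 b0 b1) BM (2, 2)
  set X := hitProb (qq r0 r1 s0 s1) BM (1, 2)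
  set Y := hitProb (qq r0 r1 s0 s1) BM (2, 1)
  set Z := hitProb (qq r0 r1 s0 s1) BM (2, 2)
  have hF1 : (24 - 2*r0 - 12*r1) * X = (6 - 5*r0 - 6*r1) + 8*r0 * Y := by
    linear_combination 24 * hE1 + 16 * r0 * hE3
  have hF2 : (24 - 2*s0 - 12*s1) * Y = (6 - 5*s0 - 6*s1) + 8*s0 * X := by
    linear_combination 24 * hE2 + 16 * s0 * hE3
  have hDX : ((24 - 2*r0 - 12*r1) * (24 - 2*s0 - 12*s1) - 64*r0*s0) * X
      = (24 - 2*s0 - 12*s1) * (6 - 5*r0 - 6*r1) + 8*r0 * (6 - 5*s0 - 6*s1) := by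
    linear_combination (24 - 2*s0 - 12*s1) * hF1 + 8*r0 * hF2
  have hDY : ((24 - 2*r0 - 12*r1) * (24 - 2*s0 - 12*s1) - 64*r0*s0) * Y
      = (24 - 2*r0 - 12*r1) * (6 - 5*s0 - 6*s1) + 8*s0 * (6 - 5*r0 - 6*r1) := by
    linear_combination (24 - 2*r0 - 12*r1) * hF2 + 8*s0 * hF1
  have hDpos : (0:ℝ) < (24 - 2*r0 - 12*r1) * (24 - 2*s0 - 12*s1) - 64*r0*s0 := by nlinarith
  have h24 : (0:ℝ) < 24 - 2*(5*b0 + 6*b1) := by nlinarith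
  set D := (24 - 2*r0 - 12*r1) * (24 - 2*s0 - 12*s1) - 64*r0*s0 with hD
  have hXle : X1 ≤ X := by
    have e1 : D * (24 - 2*(5*b0 + 6*b1)) * X1 = (6 - (5*b0 + 6*b1)) * D := by
      linear_combination D * hX1
    have e2 : D * (24 - 2*(5*b0 + 6*b1)) * X
        = ((24 - 2*s0 - 12*s1) * (6 - 5*r0 - 6*r1) + 8*r0 * (6 - 5*s0 - 6*s1))
            * (24 - 2*(5*b0 + 6*b1)) := by
      linear_combination (24 - 2*(5*b0 + 6*b1)) * hDX
    have hq : D * (24 - 2*(5*b0 + 6*b1)) * X1 ≤ D * (24 - 2*(5*b0 + 6*b1)) * X := by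
      rw [e1, e2]; linarith
    exact le_of_mul_le_mul_left hq (mul_pos hDpos h24)
  have hYle : Y1 ≤ Y := by
    have e1 : D * (24 - 2*(5*b0 + 6*b1)) * Y1 = (6 - (5*b0 + 6*b1)) * D := by
      linear_combination D * hX1 - D * (24 - 2*(5*b0 + 6*b1)) * hXY
    have e2 : D * (24 - 2*(5*b0 + 6*b1)) * Y
        = ((24 - 2*r0 - 12*r1) * (6 - 5*s0 - 6*s1) + 8*s0 * (6 - 5*r0 - 6*r1))
            * (24 - 2*(5*b0 + 6*b1)) := by
      linear_combination (24 - 2*(5*b0 + 6*b1)) * hDY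
    have hq : D * (24 - 2*(5*b0 + 6*b1)) * Y1 ≤ D * (24 - 2*(5*b0 + 6*b1)) * Y := by
      rw [e1, e2]; linarith
    exact le_of_mul_le_mul_left hq (mul_pos hDpos h24)
  have hZle : Z1 ≤ Z := by linarith
  intro i hi
  fin_cases hi
  · exact hXle
  · exact hYle
  · exact hZle

lemma extract_ineq (b0 b1 t0 t1 X1 X2 : ℝ) (hu6 : 5*b0+6*b1 < 6) (hv6 : 5*t0+6*t1 < 6)
    (hXb : (24 - 2*(5*b0+6*b1)) * X1 = 6 - (5*b0+6*b1))
    (hXt : (24 - 2*(5*t0+6*t1)) * X2 = 6 - (5*t0+6*t1))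
    (h : X1 ≤ X2) : 5*t0 + 6*t1 ≤ 5*b0 + 6*b1 := by
  have h24u : (0:ℝ) < 24 - 2*(5*b0+6*b1) := by linarith
  have h24v : (0:ℝ) < 24 - 2*(5*t0+6*t1) := by linarith
  have hq := mul_le_mul_of_nonneg_left h (mul_pos h24u h24v).le
  have e1 : (24 - 2*(5*b0+6*b1)) * (24 - 2*(5*t0+6*t1)) * X1
      = (24 - 2*(5*t0+6*t1)) * (6 - (5*b0+6*b1)) := by
    linear_combination (24 - 2*(5*t0+6*t1)) * hXb
  have e2 : (24 - 2*(5*b0+6*b1)) * (24 - 2*(5*t0+6*t1)) * X2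
      = (24 - 2*(5*b0+6*b1)) * (6 - (5*t0+6*t1)) := by
    linear_combination (24 - 2*(5*b0+6*b1)) * hXt
  rw [e1, e2] at hq
  nlinarith [hq]

/-- If `5 t0 + 6 t1 ≤ 5 b0 + 6 b1` then the policy using `b` everywhere beats any
policy using `b` or `t` at the two repair states. -/
lemma bb_opt (b0 b1 t0 t1 : ℝ)
    (hb0 : 0 < b0) (hb1 : 0 < b1) (hb : b0 + b1 < 1)
    (ht0 : 0 < t0) (ht1 : 0 < t1) (ht : t0 + t1 < 1)
    (huv : 5*t0 + 6*t1 ≤ 5*b0 + 6*b1) (c1 c2 : Bool) :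
    ∀ i ∈ GM, hitProb (qq b0 b1 b0 b1) BM i ≤
      hitProb (qq (if c1 then t0 else b0) (if c1 then t1 else b1)
                  (if c2 then t0 else b0) (if c2 then t1 else b1)) BM i := by
  have hA : (0:ℝ) ≤ 24 - 2*b0 - 12*b1 := by nlinarith
  have hAt : (0:ℝ) ≤ (24 - 2*t0 - 12*t1) + 8*t0 := by nlinarith
  have hAb : (0:ℝ) ≤ (24 - 2*b0 - 12*b1) + 8*b0 := by nlinarith
  have hd : (0:ℝ) ≤ 12*((5*b0+6*b1) - (5*t0+6*t1)) := by linarith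
  cases c1 <;> cases c2 <;> simp only [if_true, if_false, Bool.false_eq_true] <;>
    [skip; skip; skip; skip] <;>
    apply qq_compare b0 b1 _ _ _ _ hb0 hb1 hb <;> first
      | assumption
      | · nlinarith [mul_nonneg hAb hd, mul_nonneg hAt hd, mul_nonneg hA hd,
            mul_nonneg (le_of_lt hb0) hd]

set_option linter.unnecessarySimpa false in
theorem stmt19 (β0 β1 θ0 θ1 : ℝ)
    (hβ0 : 0 < β0) (hβ1 : 0 < β1) (hβ : β0 + β1 < 1)
    (hθ0 : 0 < θ0) (hθ1 : 0 < θ1) (hθ : θ0 + θ1 < 1) :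
    ((∀ g : Fin 3 × Fin 3 → Bool, ∀ i ∈ GM,
        hitProb (pMaint2 β0 β1 θ0 θ1 fun _ => false) BM i
          ≤ hitProb (pMaint2 β0 β1 θ0 θ1 g) BM i)
      ↔ 5 * θ0 + 6 * θ1 ≤ 5 * β0 + 6 * β1)
    ∧
    ((∀ g : Fin 3 × Fin 3 → Bool, ∀ i ∈ GM,
        hitProb (pMaint2 β0 β1 θ0 θ1 fun _ => true) BM i
          ≤ hitProb (pMaint2 β0 β1 θ0 θ1 g) BM i)
      ↔ 5 * β0 + 6 * β1 ≤ 5 * θ0 + 6 * θ1) := by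
  have hcF : pMaint2 β0 β1 θ0 θ1 (fun _ => false) = qq β0 β1 β0 β1 := by
    simpa using pMaint2_eq β0 β1 θ0 θ1 (fun _ => false)
  have hcT : pMaint2 β0 β1 θ0 θ1 (fun _ => true) = qq θ0 θ1 θ0 θ1 := by
    simpa using pMaint2_eq β0 β1 θ0 θ1 (fun _ => true)
  constructor
  · constructor
    · intro hopt
      have h := hopt (fun _ => true) (1, 2) (by decide)
      rw [hcF, hcT] at h
      exact extract_ineq β0 β1 θ0 θ1 _ _ (by nlinarith) (by nlinarith)
        (qq_sym β0 β1 hβ0 hβ1 hβ).2 (qq_sym θ0 θ1 hθ0 hθ1 hθ).2 h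
    · intro huv g i hi
      rw [hcF, pMaint2_eq β0 β1 θ0 θ1 g]
      exact bb_opt β0 β1 θ0 θ1 hβ0 hβ1 hβ hθ0 hθ1 hθ huv (g (1, 2)) (g (2, 1)) i hi
  · constructor
    · intro hopt
      have h := hopt (fun _ => false) (1, 2) (by decide)
      rw [hcF, hcT] at h
      exact extract_ineq θ0 θ1 β0 β1 _ _ (by nlinarith) (by nlinarith)
        (qq_sym θ0 θ1 hθ0 hθ1 hθ).2 (qq_sym β0 β1 hβ0 hβ1 hβ).2 h
    · intro huv g i hi
      rw [hcT, pMaint2_eq β0 β1 θ0 θ1 g]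
      cases hg1 : g (1, 2) <;> cases hg2 : g (2, 1) <;>
        simp only [hg1, hg2, if_true, if_false, Bool.false_eq_true]
      · simpa using bb_opt θ0 θ1 β0 β1 hθ0 hθ1 hθ hβ0 hβ1 hβ huv true true i hi
      · simpa using bb_opt θ0 θ1 β0 β1 hθ0 hθ1 hθ hβ0 hβ1 hβ huv true false i hi
      · simpa using bb_opt θ0 θ1 β0 β1 hθ0 hθ1 hθ hβ0 hβ1 hβ huv false true i hi
      · simpa using bb_opt θ0 θ1 β0 β1 hθ0 hθ1 hθ hβ0 hβ1 hβ huv false false i hi
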